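/- arXiv:1811.05131 — 3 statements merged into one kernel-verified Lean document; each statement's English description precedes it below -/
import Mathlib

section
/- Let f₀,F : ℝⁿ×ℝ^d → ℝ be C² functions and let (x̄,w̄) satisfy F(x̄,w̄) = 0, ∇ₓF(x̄,w̄) ≠ 0, and ∇ₓf₀(x̄,w̄) = 0 (Lagrange multiplier λ = 0). Define the linear maps A'₁(v,γ) = ∇²ₓₓf₀(x̄,w̄)v + γ∇ₓF(x̄,w̄) (with values in ℝⁿ) and A'₂(v,γ) = ∇²_{wx}f₀(x̄,w̄)v + γ∇_wF(x̄,w̄) (with values in ℝ^d) for (v,γ) ∈ ℝⁿ×ℝ. Assume: (1) ker A'₁ ∩ ker A'₂ = {(0,0)}; (2) every (v,γ) ∈ ker A'₁ with ⟨∇ₓF(x̄,w̄),v⟩ = 0 lies in ker A'₂; (3) every (v,γ) ∈ ker A'₁ with ⟨∇ₓF(x̄,w̄),v⟩ > 0 and γ ≥ 0 lies in ker A'₂. Then the stationary point set map S has a Lipschitz continuous single-valued localization around w̄ for x̄. -/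
noncomputable section

/-- The Euclidean space `ℝⁿ`. -/
abbrev En (n : ℕ) := EuclideanSpace ℝ (Fin n)

/-- The partial gradient in `x` of a function `f : ℝⁿ × ℝ^d → ℝ`. -/
def gradx {n d : ℕ} (f : En n × En d → ℝ) (x : En n) (w : En d) : En n :=
  gradient (fun y => f (y, w)) x

/-- The stationary (KKT) point set `S(w)` of the problem
`minimize f₀(x,w) subject to F(x,w) ≤ 0`. -/
def Sgen {n d : ℕ} (f₀ F : En n × En d → ℝ) (w : En d) : Set (En n) :=
  {x | F (x, w) ≤ 0 ∧ ∃ μ : ℝ, 0 ≤ μ ∧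
    gradx f₀ x w + μ • gradx F x w = 0 ∧ μ * F (x, w) = 0}

/-- The partial gradient in `w` of a function `f : ℝⁿ × ℝ^d → ℝ`. -/
def gradw {n d : ℕ} (f : En n × En d → ℝ) (x : En n) (w : En d) : En d :=
  gradient (fun u => f (x, u)) w

/-- The Hessian `∇²ₓₓf(x0,w0)` as a linear map `ℝⁿ → ℝⁿ`. -/
def hessxx {n d : ℕ} (f : En n × En d → ℝ) (x0 : En n) (w0 : En d) : En n →L[ℝ] En n :=
  fderiv ℝ (fun y => gradx f y w0) x0

/-- The mixed second-order derivative `∇²_{wx}f(x0,w0)`, regarded as a linear map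
`ℝⁿ → ℝ^d` (the adjoint of the derivative in `w` of `w ↦ ∇ₓf(x0,w)`). -/
def mixwx {n d : ℕ} (f : En n × En d → ℝ) (x0 : En n) (w0 : En d) : En n →L[ℝ] En d :=
  ContinuousLinearMap.adjoint (fderiv ℝ (fun w => gradx f x0 w) w0)

/-- `S` has a Lipschitz continuous single-valued localization around `w0` for `x0`:
there are neighborhoods `V` of `w0`, `U` of `x0` and a Lipschitz continuous map
`s` on `V` with `s(w0) = x0` and `S(w) ∩ U = {s(w)}` for every `w ∈ V`. -/
def HasLipschitzLocalization {n d : ℕ} (S : En d → Set (En n))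
    (w0 : En d) (x0 : En n) : Prop :=
  ∃ V ∈ nhds w0, ∃ U ∈ nhds x0, ∃ s : En d → En n, ∃ K : NNReal,
    LipschitzOnWith K s V ∧ s w0 = x0 ∧ ∀ w ∈ V, S w ∩ U = {s w}

/-!
Since the multiplier vanishes at `(x̄, w̄)`, the KKT points near it lie on two branches, both
given by the implicit function theorem: the unconstrained stationary points `x_A(w)`
(`∇ₓf₀ = 0`) and the points `(x_B(w), μ(w))` where the constraint is active
(`∇ₓf₀ + μ∇ₓF = 0`, `F = 0`). Conditions (1)–(3) make `H = ∇²ₓₓf₀` invertible and both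
systems nondegenerate.

Let `φ(w) = F(x_A(w), w)`. The branches meet exactly where `φ = 0`, with `μ = 0` there, and
differentiating both systems gives `μ'(w̄) = κ⁻¹ φ'(w̄)` with `κ = ⟪∇ₓF, H⁻¹∇ₓF⟫ > 0` and
`φ'(w̄) = ∇_wF - ∇²_{wx}f₀ H⁻¹∇ₓF ≠ 0`. Since `μ - κ⁻¹φ` vanishes on the zero set of `φ`, which
is a hypersurface, it is `o(φ)`; hence `μ > 0` exactly where `φ > 0`. The localization is `x_B`
where `φ > 0` and `x_A` elsewhere. It is Lipschitz because any segment joining the two regions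
crosses the zero set of `φ`, where the branches agree.
-/

open Filter Topology Set Metric InnerProductSpace RealInnerProductSpace

theorem eventually_pos_iff_of_isLittleO {α : Type*} {l : Filter α} {φ ψ : α → ℝ} {k : ℝ}
    (hk : 0 < k) (h : (fun w => ψ w - k * φ w) =o[l] φ) : ∀ᶠ w in l, 0 < ψ w ↔ 0 < φ w := by
  filter_upwards [h.bound (half_pos hk)] with w hw
  rw [Real.norm_eq_abs, Real.norm_eq_abs, abs_le] at hw
  constructor <;> intro h
  · by_contra! hφ
    nlinarith [abs_of_nonpos hφ]
  · nlinarith [abs_of_pos h]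

section ZeroSet

variable {E : Type*} [NormedAddCommGroup E] [NormedSpace ℝ E]

theorem exists_mem_segment_eq_zero {f : E → ℝ} {x y : E} (hf : ContinuousOn f (segment ℝ x y))
    (h : 0 ∈ uIcc (f x) (f y)) : ∃ z ∈ segment ℝ x y, f z = 0 :=
  ((convex_segment x y).isPreconnected.image f hf).ordConnected.uIcc_subset
    (mem_image_of_mem f (left_mem_segment ℝ x y)) (mem_image_of_mem f (right_mem_segment ℝ x y)) h

variable {φ h : E → ℝ} {ℓ : E →L[ℝ] ℝ} {a : E}

theorem HasStrictFDerivAt.exists_zero_near (hφ : HasStrictFDerivAt φ ℓ a) (hℓ : ℓ ≠ 0)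
    (ha : φ a = 0) :
    ∃ C, ∀ s ∈ 𝓝 a, ∀ᶠ w in 𝓝 a, ∃ p ∈ s, φ p = 0 ∧ ‖w - p‖ ≤ C * |φ w| := by
  obtain ⟨e, he⟩ : ∃ e, ℓ e = 1 := by
    obtain ⟨x, hx⟩ := DFunLike.ne_iff.mp hℓ
    exact ⟨(ℓ x)⁻¹ • x, by simp [inv_mul_cancel₀ hx]⟩
  have he0 : 0 < ‖e‖ := norm_pos_iff.mpr (by rintro rfl; simp at he)
  refine ⟨2 * ‖e‖, fun s hs => ?_⟩
  obtain ⟨K, t, ht, hlip⟩ := hφ.exists_lipschitzOnWith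
  have hest := hφ.isLittleO.def (inv_pos.mpr (mul_pos two_pos he0))
  rw [nhds_prod_eq, Filter.Eventually, Filter.mem_prod_same_iff] at hest
  obtain ⟨t', ht', hest⟩ := hest
  obtain ⟨r, hr, hball⟩ := Metric.mem_nhds_iff.mp (inter_mem (inter_mem hs ht) ht')
  have hsmall : ∀ᶠ w in 𝓝 a, |φ w| < r / (4 * ‖e‖) := by
    have := hφ.continuousAt.tendsto
    rw [ha] at this
    simpa using this.eventually (Metric.ball_mem_nhds 0 (by positivity : 0 < r / (4 * ‖e‖)))
  filter_upwards [hsmall, Metric.ball_mem_nhds a (half_pos hr)] with w hφw hw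
  -- a step of length `2 |φ w| ‖e‖` against the sign of `φ w` crosses the zero set
  set w' := w - (2 * φ w) • e
  have hww' : ‖w - w'‖ = 2 * ‖e‖ * |φ w| := by
    simp only [w', sub_sub_cancel, norm_smul, Real.norm_eq_abs, abs_mul, abs_two]; ring
  have hw' : w' ∈ ball a r := by
    rw [mem_ball, dist_eq_norm] at hw ⊢
    calc ‖w' - a‖ = ‖(w - a) - (w - w')‖ := by congr 1; abel
      _ ≤ ‖w - a‖ + ‖w - w'‖ := norm_sub_le _ _
      _ < r := by rw [hww']; nlinarith [(lt_div_iff₀ (by positivity)).mp hφw]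
  have hsub : segment ℝ w w' ⊆ ball a r :=
    (convex_ball a r).segment_subset (ball_subset_ball (by linarith) hw) hw'
  have hcross : |φ w' + φ w| ≤ |φ w| := by
    have := hest (mk_mem_prod (hball hw').2 (hball (ball_subset_ball (by linarith) hw)).2)
    simp only [mem_ofPred_eq, ← norm_neg (w' - w), neg_sub, hww'] at this
    have hℓ : ℓ (w' - w) = -(2 * φ w) := by simp [w', he]
    rw [hℓ, Real.norm_eq_abs] at this
    field_simp at this
    convert this using 2; ring
  obtain ⟨p, hp, hφp⟩ := exists_mem_segment_eq_zero (f := φ)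
    ((hlip.continuousOn).mono fun z hz => (hball (hsub hz)).1.2) (by
      rw [mem_uIcc]; rcases abs_le.mp hcross with ⟨h1, h2⟩
      rcases le_total 0 (φ w) with h | h
      · rw [abs_of_nonneg h] at h1 h2; right; constructor <;> linarith
      · rw [abs_of_nonpos h] at h1 h2; left; constructor <;> linarith)
  refine ⟨p, (hball (hsub hp)).1.1, hφp, ?_⟩
  rw [← hww', ← dist_eq_norm, ← dist_eq_norm]
  exact (dist_add_dist_of_mem_segment hp) ▸ le_add_of_nonneg_right dist_nonneg

theorem isLittleO_of_vanishes_on_zeros (hφ : HasStrictFDerivAt φ ℓ a) (hℓ : ℓ ≠ 0) (ha : φ a = 0)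
    (hh : HasStrictFDerivAt h (0 : E →L[ℝ] ℝ) a) (hzero : ∀ᶠ w in 𝓝 a, φ w = 0 → h w = 0) :
    h =o[𝓝 a] φ := by
  obtain ⟨C, hC⟩ := hφ.exists_zero_near hℓ ha
  refine Asymptotics.IsLittleO.of_bound fun ε hε => ?_
  have hest := hh.isLittleO.def (div_pos hε (by positivity : 0 < |C| + 1))
  rw [nhds_prod_eq, Filter.Eventually, Filter.mem_prod_same_iff] at hest
  obtain ⟨s, hs, hest⟩ := hest
  filter_upwards [hC (s ∩ {w | φ w = 0 → h w = 0}) (inter_mem hs hzero), hs]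
    with w ⟨p, ⟨hps, hpz⟩, hφp, hwp⟩ hws
  have hhw := hest (mk_mem_prod hws hps)
  simp only [mem_ofPred_eq, hpz hφp, zero_apply, sub_zero] at hhw
  rw [Real.norm_eq_abs, Real.norm_eq_abs]
  calc |h w| ≤ ε / (|C| + 1) * ‖w - p‖ := hhw
    _ ≤ ε / (|C| + 1) * ((|C| + 1) * |φ w|) := by
        gcongr
        exact hwp.trans (mul_le_mul_of_nonneg_right ((le_abs_self C).trans (by linarith))
          (abs_nonneg _))
    _ = ε * |φ w| := by field_simp

end ZeroSet

theorem LipschitzOnWith.piecewise_pos {E Y : Type*} [NormedAddCommGroup E] [NormedSpace ℝ E]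
    [PseudoMetricSpace Y] {f g : E → Y} {φ : E → ℝ} {s : Set E} {K : NNReal} (hs : Convex ℝ s)
    (hf : LipschitzOnWith K f s) (hg : LipschitzOnWith K g s) (hφ : ContinuousOn φ s)
    (hfg : ∀ w ∈ s, φ w = 0 → f w = g w) :
    LipschitzOnWith K (fun w => if 0 < φ w then f w else g w) s := by
  have hmixed : ∀ x ∈ s, ∀ y ∈ s, φ x ≤ 0 → 0 < φ y → dist (g x) (f y) ≤ K * dist x y := by
    intro x hx y hy hφx hφy
    obtain ⟨z, hz, hφz⟩ := exists_mem_segment_eq_zero (hφ.mono (hs.segment_subset hx hy))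
      (mem_uIcc.mpr (Or.inl ⟨hφx, hφy.le⟩))
    have hzs := hs.segment_subset hx hy hz
    calc dist (g x) (f y) ≤ dist (g x) (g z) + dist (f z) (f y) := by
          rw [hfg z hzs hφz]; exact dist_triangle _ _ _
      _ ≤ K * dist x z + K * dist z y :=
          add_le_add (hg.dist_le_mul x hx z hzs) (hf.dist_le_mul z hzs y hy)
      _ = K * dist x y := by rw [← mul_add, dist_add_dist_of_mem_segment hz]
  refine LipschitzOnWith.of_dist_le_mul fun x hx y hy => ?_
  by_cases hφx : 0 < φ x <;> by_cases hφy : 0 < φ y <;> simp only [hφx, hφy, if_true, if_false]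
  · exact hf.dist_le_mul x hx y hy
  · rw [dist_comm, dist_comm x]; exact hmixed y hy x hx (not_lt.mp hφy) hφx
  · exact hmixed x hx y hy (not_lt.mp hφx) hφy
  · exact hg.dist_le_mul x hx y hy

theorem eventually_forall_of_add_smul_eq_zero {P E : Type*} [TopologicalSpace P]
    [NormedAddCommGroup E] [NormedSpace ℝ E] {G₀ G₁ : P → E} {p₀ : P}
    (h₀ : ContinuousAt G₀ p₀) (h₁ : ContinuousAt G₁ p₀) (hG₀ : G₀ p₀ = 0) (hG₁ : G₁ p₀ ≠ 0)
    {Q : P × ℝ → Prop} (hQ : ∀ᶠ q in 𝓝 (p₀, 0), Q q) :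
    ∀ᶠ p in 𝓝 p₀, ∀ μ : ℝ, G₀ p + μ • G₁ p = 0 → Q (p, μ) := by
  rw [nhds_prod_eq] at hQ
  obtain ⟨U, hU, V, hV, hUV⟩ := Filter.eventually_prod_iff.mp hQ
  obtain ⟨ε, hε, hball⟩ := Metric.eventually_nhds_iff_ball.mp hV
  have hn₁ : 0 < ‖G₁ p₀‖ := norm_pos_iff.mpr hG₁
  have hsmall : ∀ᶠ p in 𝓝 p₀, ‖G₀ p‖ < ε * (‖G₁ p₀‖ / 2) := by
    have := h₀.norm.tendsto; rw [hG₀, norm_zero] at this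
    exact this.eventually_lt_const (by positivity)
  have hlarge : ∀ᶠ p in 𝓝 p₀, ‖G₁ p₀‖ / 2 < ‖G₁ p‖ :=
    h₁.norm.tendsto.eventually_const_lt (half_lt_self hn₁)
  filter_upwards [hU, hsmall, hlarge] with p hp hsmall hlarge μ hμ
  refine hUV hp (hball μ ?_)
  have hnorm : |μ| * ‖G₁ p‖ = ‖G₀ p‖ := by
    rw [← Real.norm_eq_abs, ← norm_smul, ← norm_neg, ← eq_neg_of_add_eq_zero_left hμ]
  rw [mem_ball, Real.dist_eq, sub_zero]
  by_contra! h
  nlinarith [mul_le_mul h hlarge.le (by positivity) (abs_nonneg μ)]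

theorem HasLipschitzLocalization.of_eventually {n d : ℕ} {S : En d → Set (En n)} {w₀ : En d}
    {x₀ : En n} {s : En d → En n} {K : NNReal} {t : Set (En d)} (ht : t ∈ 𝓝 w₀)
    (hs : LipschitzOnWith K s t) (hs₀ : s w₀ = x₀) (hmem : ∀ᶠ w in 𝓝 w₀, s w ∈ S w)
    (huniq : ∀ᶠ q in 𝓝 (w₀, x₀), q.2 ∈ S q.1 → q.2 = s q.1) :
    HasLipschitzLocalization S w₀ x₀ := by
  obtain ⟨V, hV, U, hU, hUV⟩ := mem_nhds_prod_iff.mp huniq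
  have hsU : ∀ᶠ w in 𝓝 w₀, s w ∈ U := (hs.continuousOn.continuousAt ht).tendsto (hs₀ ▸ hU)
  refine ⟨t ∩ V ∩ {w | s w ∈ S w ∧ s w ∈ U}, ?_, U, hU, s, K,
    hs.mono fun w hw => hw.1.1, hs₀, fun w hw => ?_⟩
  · filter_upwards [ht, hV, hmem, hsU] with w h₁ h₂ h₃ h₄ using ⟨⟨h₁, h₂⟩, h₃, h₄⟩
  · ext x
    exact ⟨fun hx => hUV (mk_mem_prod hw.1.2 hx.2) hx.1, fun hx => hx ▸ hw.2⟩

section ImplicitFunction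

variable {W P : Type*} [NormedAddCommGroup W] [NormedSpace ℝ W] [NormedAddCommGroup P]
  [NormedSpace ℝ P]

structure IsSolutionBranch (G : W × P → P) (w₀ : W) (p₀ : P) (σ : W → P) (σ' : W →L[ℝ] P) :
    Prop where
  map_base : σ w₀ = p₀
  hasStrictFDerivAt : HasStrictFDerivAt σ σ' w₀
  eventually_eq_zero_iff : ∀ᶠ q in 𝓝 (w₀, p₀), G q = 0 ↔ σ q.1 = q.2

theorem ContinuousLinearMap.isInvertible_of_injective [FiniteDimensional ℝ P] {f : P →L[ℝ] P}
    (hf : Function.Injective f) : f.IsInvertible :=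
  ⟨(LinearEquiv.ofInjectiveEndo f.toLinearMap hf).toContinuousLinearEquiv, rfl⟩

theorem exists_isSolutionBranch [CompleteSpace W] [FiniteDimensional ℝ P] {G : W × P → P}
    {G' : W × P →L[ℝ] P} {w₀ : W} {p₀ : P} (hG : HasStrictFDerivAt G G' (w₀, p₀))
    (hG₀ : G (w₀, p₀) = 0) (hinj : Function.Injective (G' ∘L .inr ℝ W P)) :
    ∃ σ σ', IsSolutionBranch G w₀ p₀ σ σ' := by
  have hinv := ContinuousLinearMap.isInvertible_of_injective hinj
  have hiff := hG.eventually_apply_eq_iff_implicitFunctionOfProdDomain hinv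
  rw [hG₀] at hiff
  exact ⟨_, _, hiff.self_of_nhds.mp hG₀,
    hG.hasStrictFDerivAt_implicitFunctionOfProdDomain hinv, hiff⟩

namespace IsSolutionBranch

variable {G : W × P → P} {w₀ : W} {p₀ : P} {σ : W → P} {σ' : W →L[ℝ] P}

theorem tendsto (hσ : IsSolutionBranch G w₀ p₀ σ σ') : Tendsto σ (𝓝 w₀) (𝓝 p₀) :=
  hσ.map_base ▸ hσ.hasStrictFDerivAt.continuousAt.tendsto

theorem apply_base_eq_zero (hσ : IsSolutionBranch G w₀ p₀ σ σ') : G (w₀, p₀) = 0 :=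
  hσ.eventually_eq_zero_iff.self_of_nhds.mpr hσ.map_base

theorem eventually_apply_eq_zero (hσ : IsSolutionBranch G w₀ p₀ σ σ') :
    ∀ᶠ w in 𝓝 w₀, G (w, σ w) = 0 :=
  ((tendsto_id.prodMk_nhds hσ.tendsto).eventually hσ.eventually_eq_zero_iff).mono
    fun _ hw => hw.mpr rfl

theorem apply_deriv_eq_zero (hσ : IsSolutionBranch G w₀ p₀ σ σ') {G' : W × P →L[ℝ] P}
    (hG : HasFDerivAt G G' (w₀, p₀)) (u : W) : G' (u, σ' u) = 0 := by
  have hcomp :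
      HasFDerivAt (fun w => G (w, σ w)) (G' ∘L (ContinuousLinearMap.id ℝ W).prod σ') w₀ :=
    (hσ.map_base ▸ hG).comp w₀ ((hasFDerivAt_id w₀).prodMk hσ.hasStrictFDerivAt.hasFDerivAt)
  have hzero : HasFDerivAt (fun w => G (w, σ w)) (0 : W →L[ℝ] P) w₀ :=
    (hasFDerivAt_const 0 w₀).congr_of_eventuallyEq hσ.eventually_apply_eq_zero
  simpa using congrArg (· u) (hcomp.unique hzero)

end IsSolutionBranch

end ImplicitFunction

section PartialDerivatives

variable {n d : ℕ}

-- parameter first: `implicitFunctionOfProdDomain` solves for the second component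
def gradxMap (f : En n × En d → ℝ) : En d × En n → En n := fun q => gradx f q.2 q.1

variable {f : En n × En d → ℝ} {x : En n} {w : En d}

theorem gradx_eq_toDual_symm (hf : DifferentiableAt ℝ f (x, w)) :
    gradx f x w = (toDual ℝ (En n)).symm (fderiv ℝ f (x, w) ∘L .inl ℝ (En n) (En d)) := by
  have h : HasFDerivAt (fun y => f (y, w)) (fderiv ℝ f (x, w) ∘L .inl ℝ (En n) (En d)) x :=
    hf.hasFDerivAt.comp x (hasFDerivAt_prodMk_left x w)
  rw [gradx, gradient, h.fderiv]

theorem gradw_eq_toDual_symm (hf : DifferentiableAt ℝ f (x, w)) :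
    gradw f x w = (toDual ℝ (En d)).symm (fderiv ℝ f (x, w) ∘L .inr ℝ (En n) (En d)) := by
  have h : HasFDerivAt (fun u => f (x, u)) (fderiv ℝ f (x, w) ∘L .inr ℝ (En n) (En d)) w :=
    hf.hasFDerivAt.comp w (hasFDerivAt_prodMk_right x w)
  rw [gradw, gradient, h.fderiv]

theorem fderiv_apply_eq_inner_gradx_add_inner_gradw (hf : DifferentiableAt ℝ f (x, w))
    (v : En n) (u : En d) : fderiv ℝ f (x, w) (v, u) = ⟪gradx f x w, v⟫ + ⟪gradw f x w, u⟫ := by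
  rw [gradx_eq_toDual_symm hf, gradw_eq_toDual_symm hf, toDual_symm_apply, toDual_symm_apply,
    ← ContinuousLinearMap.comp_inl_add_comp_inr]

theorem contDiff_gradxMap (hf : ContDiff ℝ 2 f) : ContDiff ℝ 1 (gradxMap f) := by
  have hdiff : Differentiable ℝ f := hf.differentiable (by norm_num)
  have heq : gradxMap f = fun q => (toDual ℝ (En n)).symm
      (fderiv ℝ f (q.2, q.1) ∘L .inl ℝ (En n) (En d)) := by
    funext q; exact gradx_eq_toDual_symm (hdiff _)
  rw [heq]
  exact (toDual ℝ (En n)).symm.contDiff.comp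
    (((hf.fderiv_right le_rfl).comp (contDiff_snd.prodMk contDiff_fst)).clm_comp contDiff_const)

theorem isSymmetric_hessxx (hf : ContDiff ℝ 2 f) (x₀ : En n) (w₀ : En d) :
    (hessxx f x₀ w₀ : En n →ₗ[ℝ] En n).IsSymmetric := by
  have hfy : ContDiff ℝ 2 fun y => f (y, w₀) := hf.comp (contDiff_id.prodMk contDiff_const)
  -- `fun y => gradx f y w₀` is `(toDual ℝ (En n)).symm ∘ fderiv ℝ (fun y => f (y, w₀))`
  have hhess : hessxx f x₀ w₀ = _ := LinearIsometryEquiv.comp_fderiv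
    (iso := (toDual ℝ (En n)).symm) (f := fderiv ℝ fun y => f (y, w₀)) (x := x₀)
  intro v v'
  rw [ContinuousLinearMap.coe_coe, hhess, ← real_inner_comm v]
  simp only [ContinuousLinearMap.comp_apply, ContinuousLinearEquiv.coe_coe,
    LinearIsometryEquiv.coe_toContinuousLinearEquiv]
  rw [toDual_symm_apply, toDual_symm_apply]
  exact (hfy.contDiffAt.isSymmSndFDerivAt (by simp [minSmoothness_of_isRCLikeNormedField])) v v'

theorem fderiv_gradxMap_apply (hf : ContDiff ℝ 2 f) (x₀ : En n) (w₀ : En d) (u : En d)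
    (v : En n) : fderiv ℝ (gradxMap f) (w₀, x₀) (u, v) =
      (mixwx f x₀ w₀).adjoint u + hessxx f x₀ w₀ v := by
  have hD : HasFDerivAt (gradxMap f) (fderiv ℝ (gradxMap f) (w₀, x₀)) (w₀, x₀) :=
    ((contDiff_gradxMap hf).differentiable one_ne_zero _).hasFDerivAt
  have hw : HasFDerivAt (fun w => gradx f x₀ w)
      (fderiv ℝ (gradxMap f) (w₀, x₀) ∘L .inl ℝ (En d) (En n)) w₀ :=
    show HasFDerivAt (gradxMap f ∘ fun w => (w, x₀)) _ w₀ from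
      hD.comp w₀ (hasFDerivAt_prodMk_left w₀ x₀)
  have hx : HasFDerivAt (fun y => gradx f y w₀)
      (fderiv ℝ (gradxMap f) (w₀, x₀) ∘L .inr ℝ (En d) (En n)) x₀ :=
    show HasFDerivAt (gradxMap f ∘ fun y => (w₀, y)) _ x₀ from
      hD.comp x₀ (hasFDerivAt_prodMk_right w₀ x₀)
  rw [mixwx, ContinuousLinearMap.adjoint_adjoint, hessxx, hw.fderiv, hx.fderiv]
  exact (ContinuousLinearMap.comp_inl_add_comp_inr _ _).symm

def activeKKT (f₀ F : En n × En d → ℝ) : En d × (En n × ℝ) → En n × ℝ :=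
  fun q => (gradxMap f₀ (q.1, q.2.1) + q.2.2 • gradxMap F (q.1, q.2.1), F (q.2.1, q.1))

theorem hasStrictFDerivAt_activeKKT {f₀ F : En n × En d → ℝ} (hf₀ : ContDiff ℝ 2 f₀)
    (hF : ContDiff ℝ 2 F) (x₀ : En n) (w₀ : En d) :
    ∃ D : En d × (En n × ℝ) →L[ℝ] En n × ℝ,
      HasStrictFDerivAt (activeKKT f₀ F) D (w₀, (x₀, 0)) ∧
      ∀ u p, D (u, p) =
        ((mixwx f₀ x₀ w₀).adjoint u + hessxx f₀ x₀ w₀ p.1 + p.2 • gradx F x₀ w₀,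
          ⟪gradx F x₀ w₀, p.1⟫ + ⟪gradw F x₀ w₀, u⟫) := by
  set q₀ : En d × (En n × ℝ) := (w₀, (x₀, 0))
  let π : En d × (En n × ℝ) →L[ℝ] En d × En n := .prod (.fst ..) (.fst .. ∘L .snd ..)
  let ρ : En d × (En n × ℝ) →L[ℝ] En n × En d := .prod (.fst .. ∘L .snd ..) (.fst ..)
  let m : En d × (En n × ℝ) →L[ℝ] ℝ := .snd .. ∘L .snd ..
  have hgrad : ∀ {f : En n × En d → ℝ}, ContDiff ℝ 2 f →
      HasStrictFDerivAt (fun q : En d × (En n × ℝ) => gradxMap f (q.1, q.2.1))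
        (fderiv ℝ (gradxMap f) (w₀, x₀) ∘L π) q₀ := fun hf =>
    ((contDiff_gradxMap hf).contDiffAt.hasStrictFDerivAt one_ne_zero).comp q₀ π.hasStrictFDerivAt
  have hF' : HasStrictFDerivAt (fun q : En d × (En n × ℝ) => F (q.2.1, q.1))
      (fderiv ℝ F (x₀, w₀) ∘L ρ) q₀ :=
    (hF.contDiffAt.hasStrictFDerivAt two_ne_zero).comp q₀ ρ.hasStrictFDerivAt
  refine ⟨_, ((hgrad hf₀).add (m.hasStrictFDerivAt.smul (hgrad hF))).prodMk hF', fun u p => ?_⟩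
  simp [π, ρ, m, q₀, fderiv_gradxMap_apply hf₀,
    fderiv_apply_eq_inner_gradx_add_inner_gradw (hF.differentiable two_ne_zero _), gradxMap]

end PartialDerivatives

section KernelConditions

variable {E D : Type*} [NormedAddCommGroup E] [InnerProductSpace ℝ E] [NormedAddCommGroup D]
  [InnerProductSpace ℝ D]

/-- Conditions (1)–(3) of the theorem on `A'₁(v, γ) = H v + γ g` and `A'₂(v, γ) = M v + γ c`. -/
structure KernelConditions (H : E →L[ℝ] E) (M : E →L[ℝ] D) (g : E) (c : D) : Prop where
  eq_zero_of_mem_ker : ∀ v (γ : ℝ), H v + γ • g = 0 → M v + γ • c = 0 → v = 0 ∧ γ = 0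
  mem_ker_of_inner_eq_zero : ∀ v (γ : ℝ), H v + γ • g = 0 → ⟪g, v⟫ = 0 → M v + γ • c = 0
  mem_ker_of_inner_pos :
    ∀ v (γ : ℝ), H v + γ • g = 0 → 0 < ⟪g, v⟫ → 0 ≤ γ → M v + γ • c = 0

namespace KernelConditions

variable {H : E →L[ℝ] E} {M : E →L[ℝ] D} {g : E} {c : D} {v : E} {γ : ℝ}

theorem eq_zero_of_inner_mul_nonneg (hK : KernelConditions H M g c) (hker : H v + γ • g = 0)
    (h : 0 ≤ ⟪g, v⟫ * γ) : v = 0 ∧ γ = 0 := by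
  rcases lt_trichotomy ⟪g, v⟫ 0 with hneg | hzero | hpos
  · have hker' : H (-v) + (-γ) • g = 0 := by rw [map_neg, neg_smul, ← neg_add, hker, neg_zero]
    have hM := hK.mem_ker_of_inner_pos _ _ hker' (by rw [inner_neg_right]; linarith)
      (by nlinarith)
    simpa using hK.eq_zero_of_mem_ker _ _ hker' hM
  · exact hK.eq_zero_of_mem_ker v γ hker (hK.mem_ker_of_inner_eq_zero v γ hker hzero)
  · exact hK.eq_zero_of_mem_ker v γ hker (hK.mem_ker_of_inner_pos v γ hker hpos (by nlinarith))

theorem injective (hK : KernelConditions H M g c) : Function.Injective H :=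
  (injective_iff_map_eq_zero H).mpr fun v hv =>
    (hK.eq_zero_of_inner_mul_nonneg (γ := 0) (by simp [hv]) (by simp)).1

theorem inner_pos (hK : KernelConditions H M g c) (hv : H v = g) : 0 < ⟪g, v⟫ := by
  by_contra! h
  simpa using (hK.eq_zero_of_inner_mul_nonneg (v := v) (γ := -1) (by simp [hv]) (by linarith)).2

theorem sub_ne_zero (hK : KernelConditions H M g c) (hv : H v = g) : c - M v ≠ 0 := by
  intro h
  rw [sub_eq_zero] at h
  simpa using (hK.eq_zero_of_mem_ker v (-1) (by simp [hv]) (by simp [← h])).2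

end KernelConditions

variable [CompleteSpace E] [CompleteSpace D] {H : E →L[ℝ] E} {M : E →L[ℝ] D} {g : E} {c : D}
  {v₀ : E} {u : D}

theorem inner_add_inner_eq_of_adjoint_add_eq_zero (hH : (H : E →ₗ[ℝ] E).IsSymmetric)
    (hv₀ : H v₀ = g) {a : E} (ha : M.adjoint u + H a = 0) :
    ⟪g, a⟫ + ⟪c, u⟫ = ⟪c - M v₀, u⟫ := by
  have : ⟪g, a⟫ = -⟪M v₀, u⟫ := by
    rw [← hv₀, ← ContinuousLinearMap.coe_coe H, hH, ContinuousLinearMap.coe_coe,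
      eq_neg_of_add_eq_zero_right ha, inner_neg_right, ContinuousLinearMap.adjoint_inner_right]
  rw [this, inner_sub_left]; ring

theorem inner_mul_eq_of_adjoint_add_eq_zero (hH : (H : E →ₗ[ℝ] E).IsSymmetric)
    (hv₀ : H v₀ = g) {v : E} {γ : ℝ} (h₁ : M.adjoint u + H v + γ • g = 0)
    (h₂ : ⟪g, v⟫ + ⟪c, u⟫ = 0) : ⟪g, v₀⟫ * γ = ⟪c - M v₀, u⟫ := by
  have h := congrArg (⟪·, v₀⟫) h₁
  simp only [inner_add_left, real_inner_smul_left, inner_zero_left,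
    ContinuousLinearMap.adjoint_inner_left] at h
  rw [← ContinuousLinearMap.coe_coe H, hH, ContinuousLinearMap.coe_coe, hv₀, real_inner_comm g,
    real_inner_comm (M v₀)] at h
  rw [inner_sub_left]
  linarith

end KernelConditions

section Branches

variable {n d : ℕ} {f₀ F : En n × En d → ℝ} {x₀ : En n} {w₀ : En d} {σA : En d → En n}
  {σA' : En d →L[ℝ] En n} {σB : En d → En n × ℝ} {σB' : En d →L[ℝ] En n × ℝ}

theorem eventually_activeBranch_eq (hA : IsSolutionBranch (gradxMap f₀) w₀ x₀ σA σA')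
    (hB : IsSolutionBranch (activeKKT f₀ F) w₀ (x₀, 0) σB σB') :
    ∀ᶠ w in 𝓝 w₀, F (σA w, w) = 0 → σB w = (σA w, 0) := by
  have hlim : Tendsto (fun w => (w, (σA w, (0 : ℝ)))) (𝓝 w₀) (𝓝 (w₀, (x₀, 0))) :=
    tendsto_id.prodMk_nhds (hA.tendsto.prodMk_nhds tendsto_const_nhds)
  filter_upwards [hlim.eventually hB.eventually_eq_zero_iff, hA.eventually_apply_eq_zero]
    with w hiff hstat hFw
  exact hiff.mp (by simp [activeKKT, hstat, hFw])

theorem hasStrictFDerivAt_F_stationaryBranch (hf₀ : ContDiff ℝ 2 f₀) (hF : ContDiff ℝ 2 F)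
    (hA : IsSolutionBranch (gradxMap f₀) w₀ x₀ σA σA') {v₀ : En n}
    (hv₀ : hessxx f₀ x₀ w₀ v₀ = gradx F x₀ w₀) :
    HasStrictFDerivAt (fun w => F (σA w, w))
      (innerSL ℝ (gradw F x₀ w₀ - mixwx f₀ x₀ w₀ v₀)) w₀ := by
  have hF' : HasStrictFDerivAt F (fderiv ℝ F (x₀, w₀)) (σA w₀, w₀) :=
    hA.map_base ▸ hF.contDiffAt.hasStrictFDerivAt two_ne_zero
  refine (hF'.comp (f := fun w => (σA w, w)) w₀
    (hA.hasStrictFDerivAt.prodMk (hasStrictFDerivAt_id w₀))).congr_fderiv ?_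
  ext u
  have hσA' := hA.apply_deriv_eq_zero
    ((contDiff_gradxMap hf₀).contDiffAt.hasStrictFDerivAt one_ne_zero).hasFDerivAt u
  rw [fderiv_gradxMap_apply hf₀] at hσA'
  simp only [ContinuousLinearMap.comp_apply, ContinuousLinearMap.prod_apply,
    ContinuousLinearMap.id_apply, innerSL_apply_apply]
  rw [fderiv_apply_eq_inner_gradx_add_inner_gradw (hF.differentiable two_ne_zero _)]
  exact inner_add_inner_eq_of_adjoint_add_eq_zero (isSymmetric_hessxx hf₀ x₀ w₀) hv₀ hσA'

theorem eventually_pos_iff_of_isSolutionBranch (hf₀ : ContDiff ℝ 2 f₀) (hF : ContDiff ℝ 2 F)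
    (hK : KernelConditions (hessxx f₀ x₀ w₀) (mixwx f₀ x₀ w₀) (gradx F x₀ w₀) (gradw F x₀ w₀))
    (hA : IsSolutionBranch (gradxMap f₀) w₀ x₀ σA σA')
    (hB : IsSolutionBranch (activeKKT f₀ F) w₀ (x₀, 0) σB σB') :
    ∀ᶠ w in 𝓝 w₀, 0 < (σB w).2 ↔ 0 < F (σA w, w) := by
  obtain ⟨v₀, hv₀⟩ := (LinearMap.injective_iff_surjective
    (f := (hessxx f₀ x₀ w₀ : En n →ₗ[ℝ] En n))).mp hK.injective (gradx F x₀ w₀)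
  have hκ := hK.inner_pos hv₀
  have hφ := hasStrictFDerivAt_F_stationaryBranch hf₀ hF hA hv₀
  obtain ⟨D, hD, hD_apply⟩ := hasStrictFDerivAt_activeKKT hf₀ hF x₀ w₀
  -- the multiplier `μ = (σB ·).2` and `κ⁻¹ φ`, `κ = ⟪∇ₓF, v₀⟫`, have the same derivative
  have hψ : HasStrictFDerivAt (fun w => (σB w).2 - ⟪gradx F x₀ w₀, v₀⟫⁻¹ * F (σA w, w))
      (0 : En d →L[ℝ] ℝ) w₀ := by
    refine ((hasStrictFDerivAt_snd.comp w₀ hB.hasStrictFDerivAt).sub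
      (hφ.const_mul _)).congr_fderiv ?_
    ext u
    have h := hB.apply_deriv_eq_zero hD.hasFDerivAt u
    rw [hD_apply, Prod.ext_iff] at h
    have := inner_mul_eq_of_adjoint_add_eq_zero (isSymmetric_hessxx hf₀ x₀ w₀) hv₀ h.1 h.2
    simp only [sub_apply, ContinuousLinearMap.comp_apply,
      ContinuousLinearMap.coe_snd', smul_apply, innerSL_apply_apply,
      smul_eq_mul, zero_apply, ← this]
    field_simp
    ring
  refine eventually_pos_iff_of_isLittleO (inv_pos.2 hκ)
    (isLittleO_of_vanishes_on_zeros hφ ?_ ?_ hψ ?_)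
  · rw [← norm_ne_zero_iff, innerSL_apply_norm, norm_ne_zero_iff]
    exact hK.sub_ne_zero hv₀
  · rw [hA.map_base]; exact congrArg Prod.snd hB.apply_base_eq_zero
  · filter_upwards [eventually_activeBranch_eq hA hB] with w hw hFw
    simp [hw hFw, hFw]

theorem exists_isSolutionBranch_gradxMap (hf₀ : ContDiff ℝ 2 f₀)
    (hstat : gradx f₀ x₀ w₀ = 0) (hH : Function.Injective (hessxx f₀ x₀ w₀)) :
    ∃ σA σA', IsSolutionBranch (gradxMap f₀) w₀ x₀ σA σA' := by
  refine exists_isSolutionBranch ((contDiff_gradxMap hf₀).contDiffAt.hasStrictFDerivAt one_ne_zero)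
    hstat fun v v' h => hH ?_
  simpa [fderiv_gradxMap_apply hf₀] using h

theorem exists_isSolutionBranch_activeKKT (hf₀ : ContDiff ℝ 2 f₀) (hF : ContDiff ℝ 2 F)
    (hFeq : F (x₀, w₀) = 0) (hstat : gradx f₀ x₀ w₀ = 0)
    (hK : KernelConditions (hessxx f₀ x₀ w₀) (mixwx f₀ x₀ w₀) (gradx F x₀ w₀) (gradw F x₀ w₀)) :
    ∃ σB σB', IsSolutionBranch (activeKKT f₀ F) w₀ (x₀, 0) σB σB' := by
  obtain ⟨D, hD, hD_apply⟩ := hasStrictFDerivAt_activeKKT hf₀ hF x₀ w₀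
  refine exists_isSolutionBranch hD (by simp [activeKKT, gradxMap, hstat, hFeq])
    ((injective_iff_map_eq_zero _).mpr ?_)
  rintro ⟨v, γ⟩ h
  simp only [ContinuousLinearMap.comp_apply, ContinuousLinearMap.inr_apply, hD_apply, map_zero,
    zero_add, inner_zero_right, add_zero, Prod.mk_eq_zero] at h
  obtain ⟨rfl, rfl⟩ := hK.eq_zero_of_inner_mul_nonneg h.1 (by rw [h.2, zero_mul])
  rfl

def kktSelection (F : En n × En d → ℝ) (σA : En d → En n) (σB : En d → En n × ℝ) (w : En d) :
    En n :=
  if 0 < F (σA w, w) then (σB w).1 else σA w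

theorem exists_lipschitzOnWith_kktSelection (hF : Continuous F)
    (hA : IsSolutionBranch (gradxMap f₀) w₀ x₀ σA σA')
    (hB : IsSolutionBranch (activeKKT f₀ F) w₀ (x₀, 0) σB σB') :
    ∃ K, ∃ t ∈ 𝓝 w₀, LipschitzOnWith K (kktSelection F σA σB) t := by
  obtain ⟨KA, tA, htA, hlipA⟩ := hA.hasStrictFDerivAt.exists_lipschitzOnWith
  obtain ⟨KB, tB, htB, hlipB⟩ := hB.hasStrictFDerivAt.exists_lipschitzOnWith
  obtain ⟨r, hr, hball⟩ := Metric.mem_nhds_iff.mp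
    (inter_mem (inter_mem htA htB) (eventually_activeBranch_eq hA hB))
  have hA' : LipschitzOnWith KA σA (ball w₀ r) := hlipA.mono fun w hw => (hball hw).1.1
  have hB' : LipschitzOnWith KB (fun w => (σB w).1) (ball w₀ r) := by
    have h := LipschitzWith.prod_fst.comp_lipschitzOnWith (hlipB.mono fun w hw => (hball hw).1.2)
    rw [one_mul] at h
    exact h
  refine ⟨max KA KB, ball w₀ r, ball_mem_nhds w₀ hr, LipschitzOnWith.piecewise_pos
    (convex_ball w₀ r) (hB'.weaken (le_max_right _ _)) (hA'.weaken (le_max_left _ _))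
    (hF.comp_continuousOn (hA'.continuousOn.prodMk continuousOn_id)) fun w hw hFw => ?_⟩
  exact congrArg Prod.fst ((hball hw).2 hFw)

theorem eventually_kktSelection_mem (hA : IsSolutionBranch (gradxMap f₀) w₀ x₀ σA σA')
    (hB : IsSolutionBranch (activeKKT f₀ F) w₀ (x₀, 0) σB σB')
    (hsign : ∀ᶠ w in 𝓝 w₀, 0 < (σB w).2 ↔ 0 < F (σA w, w)) :
    ∀ᶠ w in 𝓝 w₀, kktSelection F σA σB w ∈ Sgen f₀ F w := by
  filter_upwards [hA.eventually_apply_eq_zero, hB.eventually_apply_eq_zero, hsign]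
    with w hAw hBw hsw
  simp only [activeKKT, gradxMap, Prod.mk_eq_zero] at hAw hBw
  unfold kktSelection
  split_ifs with h
  · exact ⟨hBw.2.le, (σB w).2, (hsw.mpr h).le, hBw.1, by rw [hBw.2, mul_zero]⟩
  · exact ⟨not_lt.mp h, 0, le_rfl, by simpa using hAw, zero_mul _⟩

theorem eventually_eq_kktSelection_of_mem (hf₀ : Continuous (gradxMap f₀))
    (hF : Continuous (gradxMap F)) (hgF : gradx F x₀ w₀ ≠ 0)
    (hA : IsSolutionBranch (gradxMap f₀) w₀ x₀ σA σA')
    (hB : IsSolutionBranch (activeKKT f₀ F) w₀ (x₀, 0) σB σB')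
    (hsign : ∀ᶠ w in 𝓝 w₀, 0 < (σB w).2 ↔ 0 < F (σA w, w)) :
    ∀ᶠ q in 𝓝 (w₀, x₀), q.2 ∈ Sgen f₀ F q.1 → q.2 = kktSelection F σA σB q.1 := by
  have hB' : ∀ᶠ r in 𝓝 ((w₀, x₀), (0 : ℝ)),
      activeKKT f₀ F (r.1.1, (r.1.2, r.2)) = 0 ↔ σB r.1.1 = (r.1.2, r.2) :=
    ((by fun_prop : Continuous fun r : (En d × En n) × ℝ => (r.1.1, (r.1.2, r.2))).tendsto
      ((w₀, x₀), 0)).eventually hB.eventually_eq_zero_iff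
  -- KKT points near `(w₀, x₀)` have small multipliers, since `∇ₓF(x₀, w₀) ≠ 0`
  have hmult := eventually_forall_of_add_smul_eq_zero hf₀.continuousAt hF.continuousAt
    hA.apply_base_eq_zero hgF hB'
  filter_upwards [hmult, hA.eventually_eq_zero_iff,
    (continuous_fst.tendsto (w₀, x₀)).eventually hsign]
    with ⟨w, x⟩ hmult hAiff hsw ⟨hFle, μ, hμ, hstat, hcompl⟩
  unfold kktSelection
  rcases hμ.eq_or_lt with rfl | hμpos
  · obtain rfl : σA w = x := hAiff.mp (by simpa [gradxMap] using hstat)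
    rw [if_neg (not_lt.mpr hFle)]
  · have hFx : F (x, w) = 0 := (mul_eq_zero.mp hcompl).resolve_left hμpos.ne'
    have hσB : σB w = (x, μ) := (hmult μ hstat).mp (by simp [activeKKT, gradxMap, hstat, hFx])
    rw [if_pos (hsw.mp (by rw [hσB]; exact hμpos)), hσB]

theorem hasLipschitzLocalization_of_isSolutionBranch (hF : Continuous F)
    (hf₀' : Continuous (gradxMap f₀)) (hF' : Continuous (gradxMap F)) (hgF : gradx F x₀ w₀ ≠ 0)
    (hA : IsSolutionBranch (gradxMap f₀) w₀ x₀ σA σA')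
    (hB : IsSolutionBranch (activeKKT f₀ F) w₀ (x₀, 0) σB σB')
    (hsign : ∀ᶠ w in 𝓝 w₀, 0 < (σB w).2 ↔ 0 < F (σA w, w)) :
    HasLipschitzLocalization (Sgen f₀ F) w₀ x₀ := by
  obtain ⟨K, t, ht, hlip⟩ := exists_lipschitzOnWith_kktSelection hF hA hB
  have hFw₀ : F (σA w₀, w₀) = 0 := by
    rw [hA.map_base]; exact congrArg Prod.snd hB.apply_base_eq_zero
  refine .of_eventually ht hlip ?_ (eventually_kktSelection_mem hA hB hsign)
    (eventually_eq_kktSelection_of_mem hf₀' hF' hgF hA hB hsign)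
  rw [kktSelection, hFw₀, if_neg (lt_irrefl 0), hA.map_base]

end Branches

open RealInnerProductSpace in
/-- Degenerate case `λ = 0`: under the kernel conditions (1)–(3) on
`A'₁(v,γ) = ∇²ₓₓf₀ v + γ∇ₓF` and `A'₂(v,γ) = ∇²_{wx}f₀ v + γ∇_wF`, the map `S` has
a Lipschitz continuous single-valued localization around `w0` for `x0`. -/
theorem stmt11 {n d : ℕ} (f₀ F : En n × En d → ℝ)
    (hf₀ : ContDiff ℝ 2 f₀) (hF : ContDiff ℝ 2 F)
    (x0 : En n) (w0 : En d)
    (hFeq : F (x0, w0) = 0)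
    (hgF : gradx F x0 w0 ≠ 0)
    (hstat : gradx f₀ x0 w0 = 0)
    (h1 : ∀ (v : En n) (γ : ℝ),
      hessxx f₀ x0 w0 v + γ • gradx F x0 w0 = 0 →
      mixwx f₀ x0 w0 v + γ • gradw F x0 w0 = 0 → v = 0 ∧ γ = 0)
    (h2 : ∀ (v : En n) (γ : ℝ),
      hessxx f₀ x0 w0 v + γ • gradx F x0 w0 = 0 →
      ⟪gradx F x0 w0, v⟫ = 0 →
      mixwx f₀ x0 w0 v + γ • gradw F x0 w0 = 0)
    (h3 : ∀ (v : En n) (γ : ℝ),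
      hessxx f₀ x0 w0 v + γ • gradx F x0 w0 = 0 →
      0 < ⟪gradx F x0 w0, v⟫ → 0 ≤ γ →
      mixwx f₀ x0 w0 v + γ • gradw F x0 w0 = 0) :
    HasLipschitzLocalization (Sgen f₀ F) w0 x0 := by
  have hK : KernelConditions (hessxx f₀ x0 w0) (mixwx f₀ x0 w0) (gradx F x0 w0) (gradw F x0 w0) :=
    ⟨h1, h2, h3⟩
  obtain ⟨σA, σA', hA⟩ := exists_isSolutionBranch_gradxMap hf₀ hstat hK.injective
  obtain ⟨σB, σB', hB⟩ := exists_isSolutionBranch_activeKKT hf₀ hF hFeq hstat hK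
  exact hasLipschitzLocalization_of_isSolutionBranch hF.continuous
    (contDiff_gradxMap hf₀).continuous (contDiff_gradxMap hF).continuous hgF hA hB
    (eventually_pos_iff_of_isSolutionBranch hf₀ hF hK hA hB)
end
end

section
/- Let f₀,F : ℝⁿ×ℝ^d → ℝ be C² functions and let (x̄,w̄) satisfy F(x̄,w̄) = 0, ∇ₓF(x̄,w̄) ≠ 0, and suppose λ > 0 satisfies ∇ₓf₀(x̄,w̄)+λ∇ₓF(x̄,w̄) = 0. Then the generalized equation 0 ∈ g(x,α,w̄) + N_K(x,α) is strongly regular at (x̄,λ) if and only if the (n+1)×(n+1) matrix with block form [[∇²ₓₓL(x̄,λ,w̄), ∇ₓF(x̄,w̄)],[∇ₓF(x̄,w̄)ᵀ, 0]] is nonsingular, where L(x,α,w)=f₀(x,w)+αF(x,w) and ∇²ₓₓL(x̄,λ,w̄)=∇²ₓₓf₀(x̄,w̄)+λ∇²ₓₓF(x̄,w̄). -/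
/-!
Since `λ > 0`, the point `(x̄, λ)` lies in the interior of `K`, so near it `N_K = {0}` and, as
`(x̄, λ)` is a KKT point, the linearized inclusion is just the linear equation `A (z - z̄) = q`
with `A = ∇g(x̄, λ, w̄)`. Strong regularity is then invertibility of `A`: if `A` is injective,
`q ↦ z̄ + A⁻¹ q` is the Lipschitz solution map; a kernel vector `v` would make every point
`z̄ + t v` a solution for `q = 0`, against local uniqueness. Finally
`A (v, a) = (∇²ₓₓL v + a ∇ₓF, -⟪∇ₓF, v⟫)`, which is injective iff the bordered matrix is
nonsingular.
-/

open RealInnerProductSpace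

noncomputable section

/-- The Lagrangian `L(x,α,w) = f₀(x,w) + α F(x,w)`. -/
def Lag {n d : ℕ} (f₀ F : En n × En d → ℝ) (x : En n) (α : ℝ) (w : En d) : ℝ :=
  f₀ (x, w) + α * F (x, w)

/-- The map `g(x,α,w) = (∇ₓL(x,α,w), −F(x,w)) ∈ ℝⁿ × ℝ`, as a function of
`z = (x,α)`. -/
def gmap {n d : ℕ} (f₀ F : En n × En d → ℝ) (z : En n × ℝ) (w : En d) : En n × ℝ :=
  (gradient (fun y => Lag f₀ F y z.2 w) z.1, - F (z.1, w))

/-- The normal cone `N_K(z)` of the convex set `K = ℝⁿ × ℝ₊` at `z`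
(`N_K(z) = ∅` for `z ∉ K`). -/
def NK {n : ℕ} (z : En n × ℝ) : Set (En n × ℝ) :=
  {v | 0 ≤ z.2 ∧ ∀ y : En n × ℝ, 0 ≤ y.2 → ⟪v.1, y.1 - z.1⟫ + v.2 * (y.2 - z.2) ≤ 0}

/-- The generalized equation `0 ∈ g(x,α,w0) + N_K(x,α)` is strongly regular at a
solution `zbar = (x̄,λ)`: there are `ℓ₀ > 0` and neighborhoods `U` of `0`, `V` of
`zbar` such that for each `q ∈ U` the linearized inclusion
`q ∈ g(zbar) + ∇g(zbar)(z − zbar) + N_K(z)` has a unique solution `z = s₀(q)` in `V`,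
and `s₀ : U → V` is Lipschitz with modulus `ℓ₀`. -/
def StrongRegular {n d : ℕ} (f₀ F : En n × En d → ℝ) (w0 : En d)
    (zbar : En n × ℝ) : Prop :=
  ∃ ℓ₀ : NNReal, 0 < ℓ₀ ∧ ∃ U ∈ nhds (0 : En n × ℝ), ∃ V ∈ nhds zbar,
    ∃ s₀ : En n × ℝ → En n × ℝ, LipschitzOnWith ℓ₀ s₀ U ∧
      ∀ q ∈ U, s₀ q ∈ V ∧
        q - gmap f₀ F zbar w0
          - (fderiv ℝ (fun z => gmap f₀ F z w0) zbar) (s₀ q - zbar) ∈ NK (s₀ q) ∧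
        ∀ z ∈ V,
          q - gmap f₀ F zbar w0
            - (fderiv ℝ (fun z' => gmap f₀ F z' w0) zbar) (z - zbar) ∈ NK z →
          z = s₀ q

/-- The `(n+1)×(n+1)` block matrix `[[M, u], [uᵀ, 0]]`. -/
def blockMat {n : ℕ} (M : Matrix (Fin n) (Fin n) ℝ) (u : Fin n → ℝ) :
    Matrix (Fin n ⊕ Unit) (Fin n ⊕ Unit) ℝ :=
  Matrix.fromBlocks M (Matrix.of fun i (_ : Unit) => u i)
    (Matrix.of fun (_ : Unit) j => u j) 0

/-- The matrix of the Hessian in `x` of `x ↦ L(x,α,w0)` at `x0` (for `(QP)`-type data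
this is `∇²ₓₓf₀(x0,w0) + α∇²ₓₓF(x0,w0)`). -/
def hessLagMat {n d : ℕ} (f₀ F : En n × En d → ℝ) (x0 : En n) (α : ℝ) (w0 : En d) :
    Matrix (Fin n) (Fin n) ℝ :=
  Matrix.of fun i j =>
    (fderiv ℝ (fun y => gradient (fun y' => Lag f₀ F y' α w0) y) x0)
      (EuclideanSpace.single j (1 : ℝ)) i

open Filter Topology

section LinearGE

variable {E : Type*} [NormedAddCommGroup E] [NormedSpace ℝ E]

/-- `StrongRegular f₀ F w0 zbar` unfolds to this with `A = ∇g(zbar)`, `b = g(zbar)`, `N = NK`. -/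
def StronglyRegularLinearGE (A : E →L[ℝ] E) (b : E) (N : E → Set E) (zbar : E) : Prop :=
  ∃ ℓ₀ : NNReal, 0 < ℓ₀ ∧ ∃ U ∈ 𝓝 (0 : E), ∃ V ∈ 𝓝 zbar, ∃ s₀ : E → E, LipschitzOnWith ℓ₀ s₀ U ∧
    ∀ q ∈ U, s₀ q ∈ V ∧ q - b - A (s₀ q - zbar) ∈ N (s₀ q) ∧
      ∀ z ∈ V, q - b - A (z - zbar) ∈ N z → z = s₀ q

variable {A : E →L[ℝ] E} {N : E → Set E} {zbar : E}

theorem StronglyRegularLinearGE.injective (hN : ∀ᶠ z in 𝓝 zbar, N z = {0})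
    (h : StronglyRegularLinearGE A 0 N zbar) : Function.Injective A := by
  obtain ⟨-, -, U, hU, V, hV, s₀, -, hs₀⟩ := h
  have huniq : ∀ᶠ z in 𝓝 zbar, A (z - zbar) = 0 → z = s₀ 0 := by
    filter_upwards [hV, hN] with z hzV hzN hAz
    exact (hs₀ 0 (mem_of_mem_nhds hU)).2.2 z hzV (by simp [hzN, hAz])
  refine (injective_iff_map_eq_zero A).2 fun v hv => ?_
  have hline : ∀ᶠ t : ℝ in 𝓝 0, zbar + t • v = s₀ 0 := by
    have hc : Tendsto (fun t : ℝ => zbar + t • v) (𝓝 0) (𝓝 zbar) :=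
      (by fun_prop : Continuous fun t : ℝ => zbar + t • v).tendsto' 0 zbar (by simp)
    filter_upwards [hc.eventually huniq] with t ht
    exact ht (by simp [hv])
  obtain ⟨t, ht, ht0⟩ := ((hline.filter_mono nhdsWithin_le_nhds).and
    (self_mem_nhdsWithin : {t : ℝ | t ≠ 0} ∈ 𝓝[≠] 0)).exists
  have h0 : zbar = s₀ 0 := by simpa using hline.self_of_nhds
  have htv : t • v = 0 := by simpa [← h0] using ht
  exact (smul_eq_zero.1 htv).resolve_left ht0

variable [FiniteDimensional ℝ E]

theorem stronglyRegularLinearGE_of_injective (hN : ∀ᶠ z in 𝓝 zbar, N z = {0})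
    (hA : Function.Injective A) : StronglyRegularLinearGE A 0 N zbar := by
  let e : E ≃L[ℝ] E := (LinearEquiv.ofInjectiveEndo (A : E →ₗ[ℝ] E) hA).toContinuousLinearEquiv
  have hAe : ∀ q, A (e.symm q) = q := e.apply_symm_apply
  set V := {z | N z = {0}}
  have hU : (fun q => zbar + e.symm q) ⁻¹' V ∈ 𝓝 (0 : E) :=
    ((continuous_const.add e.symm.continuous).tendsto' 0 zbar (by simp)).eventually hN
  refine ⟨‖(e.symm : E →L[ℝ] E)‖₊ + 1, by positivity, _, hU, V, hN, fun q => zbar + e.symm q,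
    ?_, fun q hq => ⟨hq, ?_, fun z hzV hz => ?_⟩⟩
  · have hL := (e.symm : E →L[ℝ] E).lipschitz.weaken (le_add_of_nonneg_right zero_le_one)
    refine LipschitzWith.lipschitzOnWith fun q q' => ?_
    rw [edist_add_left]
    exact hL q q'
  · have hNq : N (zbar + e.symm q) = {0} := hq
    simp [hNq, hAe]
  · have hNz : N z = {0} := hzV
    rw [hNz, Set.mem_singleton_iff, sub_zero, sub_eq_zero] at hz
    rw [hz]
    change z = zbar + e.symm (e (z - zbar))
    rw [e.symm_apply_apply, add_sub_cancel]

theorem stronglyRegularLinearGE_iff_injective (hN : ∀ᶠ z in 𝓝 zbar, N z = {0}) :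
    StronglyRegularLinearGE A 0 N zbar ↔ Function.Injective A :=
  ⟨StronglyRegularLinearGE.injective hN, stronglyRegularLinearGE_of_injective hN⟩

end LinearGE

section NormalCone

variable {n : ℕ}

theorem NK_eq_singleton_zero {z : En n × ℝ} (hz : 0 < z.2) : NK z = {0} := by
  ext v
  refine ⟨fun ⟨_, hv⟩ => ?_, fun hv => ⟨hz.le, fun y _ => by simp [Set.mem_singleton_iff.1 hv]⟩⟩
  have h₁ := hv (z.1 + v.1, z.2) hz.le
  have h₂ := hv (z.1, 2 * z.2) (by positivity)
  have h₃ := hv (z.1, 0) le_rfl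
  simp only [add_sub_cancel_left, sub_self, mul_zero, add_zero, inner_zero_right, zero_add]
    at h₁ h₂ h₃
  have hv₁ : v.1 = 0 := inner_self_eq_zero.1 (le_antisymm h₁ real_inner_self_nonneg)
  have hv₂ : v.2 = 0 := by nlinarith
  exact Prod.ext hv₁ hv₂

theorem eventually_NK_eq_singleton_zero {zbar : En n × ℝ} (hz : 0 < zbar.2) :
    ∀ᶠ z in 𝓝 zbar, NK z = {0} :=
  ((continuous_snd.tendsto zbar).eventually_const_lt hz).mono fun _ => NK_eq_singleton_zero

end NormalCone

section Bordered

variable {E : Type*} [NormedAddCommGroup E] [InnerProductSpace ℝ E]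

def borderedMap (T : E →L[ℝ] E) (u : E) : E × ℝ →L[ℝ] E × ℝ :=
  (T.comp (.fst ℝ E ℝ) + (ContinuousLinearMap.snd ℝ E ℝ).smulRight u).prod
    (-(innerSL ℝ u).comp (.fst ℝ E ℝ))

@[simp]
theorem borderedMap_apply (T : E →L[ℝ] E) (u : E) (v : E × ℝ) :
    borderedMap T u v = (T v.1 + v.2 • u, -⟪u, v.1⟫) := by
  simp [borderedMap]

theorem injective_borderedMap_iff (T : E →L[ℝ] E) (u : E) :
    Function.Injective (borderedMap T u) ↔
      ∀ (x : E) (a : ℝ), T x + a • u = 0 → ⟪u, x⟫ = 0 → x = 0 ∧ a = 0 := by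
  rw [injective_iff_map_eq_zero]
  simp only [Prod.forall, borderedMap_apply, Prod.mk_eq_zero, neg_eq_zero, and_imp]

end Bordered

section BlockMatrix

open Matrix

variable {n : ℕ}

theorem blockMat_mulVec (M : Matrix (Fin n) (Fin n) ℝ) (u : Fin n → ℝ) (x : Fin n ⊕ Unit → ℝ) :
    blockMat M u *ᵥ x = Sum.elim (M *ᵥ (x ∘ Sum.inl) + x (Sum.inr ()) • u)
      (fun _ => u ⬝ᵥ (x ∘ Sum.inl)) := by
  ext (i | _) <;> simp [blockMat, mulVec, dotProduct, mul_comm]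

theorem det_blockMat_ne_zero_iff (M : Matrix (Fin n) (Fin n) ℝ) (u : Fin n → ℝ) :
    (blockMat M u).det ≠ 0 ↔
      ∀ (x : Fin n → ℝ) (a : ℝ), M *ᵥ x + a • u = 0 → u ⬝ᵥ x = 0 → x = 0 ∧ a = 0 := by
  rw [Ne, ← exists_mulVec_eq_zero_iff, not_exists]
  refine ⟨fun h x a hx ha => ?_, fun h v ⟨hv0, hv⟩ => hv0 ?_⟩
  · by_contra hne
    refine h (Sum.elim x fun _ => a) ⟨fun h0 => hne ⟨?_, ?_⟩, ?_⟩
    · simpa using congrArg (· ∘ Sum.inl) h0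
    · simpa using congrFun h0 (Sum.inr ())
    · ext (i | _) <;> simp [blockMat_mulVec, hx, ha]
  · rw [blockMat_mulVec] at hv
    obtain ⟨hx, ha⟩ := h _ _ (by simpa using congrArg (· ∘ Sum.inl) hv)
      (by simpa using congrFun hv (Sum.inr ()))
    ext (i | _)
    · simpa using congrFun hx i
    · simpa using ha

theorem mulVec_eq_ofLp_apply (T : En n →L[ℝ] En n) (x : Fin n → ℝ) :
    (Matrix.of fun i j => T (EuclideanSpace.single j 1) i) *ᵥ x =
      (T (WithLp.toLp 2 x)).ofLp := by
  have hx : WithLp.toLp 2 x = ∑ j, x j • EuclideanSpace.single j (1 : ℝ) := by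
    ext i
    simp [Pi.single_apply]
  ext i
  simp [mulVec, dotProduct, hx, mul_comm]

theorem det_blockMat_ne_zero_iff_injective (T : En n →L[ℝ] En n) (u : En n) :
    (blockMat (Matrix.of fun i j => T (EuclideanSpace.single j 1) i) (fun i => u i)).det ≠ 0 ↔
      Function.Injective (borderedMap T u) := by
  rw [det_blockMat_ne_zero_iff, injective_borderedMap_iff]
  refine (WithLp.equiv 2 (Fin n → ℝ)).symm.forall_congr fun x => forall_congr' fun a => ?_
  have hTx : T (WithLp.toLp 2 x) + a • u = 0 ↔
      (Matrix.of fun i j => T (EuclideanSpace.single j 1) i) *ᵥ x + a • u.ofLp = 0 := by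
    rw [mulVec_eq_ofLp_apply, ← WithLp.ofLp_eq_zero]
    rfl
  simp [hTx, EuclideanSpace.inner_eq_star_dotProduct, dotProduct_comm]

end BlockMatrix

section Gradient

variable {E : Type*} [NormedAddCommGroup E] [InnerProductSpace ℝ E] [CompleteSpace E]

theorem HasGradientAt.add_const_mul {f g : E → ℝ} {f' g' x : E} (hf : HasGradientAt f f' x)
    (hg : HasGradientAt g g' x) (c : ℝ) :
    HasGradientAt (fun y => f y + c * g y) (f' + c • g') x := by
  rw [hasGradientAt_iff_hasFDerivAt] at *
  refine (hf.add (hg.const_mul c)).congr_fderiv ?_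
  ext v
  simp

theorem contDiff_gradient {ι : Type*} [Fintype ι] {φ : EuclideanSpace ℝ ι → ℝ} {k : WithTop ℕ∞}
    (hφ : ContDiff ℝ (k + 1) φ) : ContDiff ℝ k (gradient φ) := by
  classical
  refine contDiff_euclidean.2 fun i => ?_
  have hcoord : (fun x => gradient φ x i) = fun x => fderiv ℝ φ x (EuclideanSpace.single i 1) := by
    ext x
    rw [← inner_gradient_left, EuclideanSpace.inner_single_right]
    simp
  rw [hcoord]
  exact (hφ.fderiv_right le_rfl).clm_apply contDiff_const

theorem hasFDerivAt_add_smul_prodMk_neg {h₀ h₁ : E → E} {φ : E → ℝ} {x : E} (lam : ℝ)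
    (hh₀ : DifferentiableAt ℝ h₀ x) (hh₁ : DifferentiableAt ℝ h₁ x)
    (hφ : HasGradientAt φ (h₁ x) x) :
    HasFDerivAt (fun z : E × ℝ => (h₀ z.1 + z.2 • h₁ z.1, -φ z.1))
      (borderedMap (fderiv ℝ (fun y => h₀ y + lam • h₁ y) x) (h₁ x)) (x, lam) := by
  have hfst : HasFDerivAt (Prod.fst : E × ℝ → E) (.fst ℝ E ℝ) (x, lam) := hasFDerivAt_fst
  have hsnd : HasFDerivAt (Prod.snd : E × ℝ → ℝ) (.snd ℝ E ℝ) (x, lam) := hasFDerivAt_snd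
  have hsum : fderiv ℝ (fun y => h₀ y + lam • h₁ y) x = fderiv ℝ h₀ x + lam • fderiv ℝ h₁ x :=
    (hh₀.hasFDerivAt.add (hh₁.hasFDerivAt.const_smul lam)).fderiv
  have hφ' := (hasGradientAt_iff_hasFDerivAt.1 hφ).comp (x, lam) hfst
  refine (((hh₀.hasFDerivAt.comp (x, lam) hfst).add
    (hsnd.smul (hh₁.hasFDerivAt.comp (x, lam) hfst))).prodMk hφ'.neg).congr_fderiv ?_
  ext v <;> simp [hsum]

end Gradient

section Lagrangian

variable {n d : ℕ} {f₀ F : En n × En d → ℝ}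

theorem gradient_lag (hf₀ : Differentiable ℝ f₀) (hF : Differentiable ℝ F) (x : En n) (α : ℝ)
    (w : En d) : gradient (fun y => Lag f₀ F y α w) x = gradx f₀ x w + α • gradx F x w :=
  (((hf₀.comp (by fun_prop)).differentiableAt (x := x)).hasGradientAt.add_const_mul
    ((hF.comp (by fun_prop)).differentiableAt (x := x)).hasGradientAt α).gradient

theorem contDiff_gradx (hf : ContDiff ℝ 2 F) (w : En d) : ContDiff ℝ 1 fun x => gradx F x w :=
  contDiff_gradient (hf.comp (by fun_prop))

theorem hasFDerivAt_gmap (hf₀ : ContDiff ℝ 2 f₀) (hF : ContDiff ℝ 2 F) (x0 : En n) (w0 : En d)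
    (lam : ℝ) :
    HasFDerivAt (fun z => gmap f₀ F z w0)
      (borderedMap (fderiv ℝ (fun y => gradient (fun y' => Lag f₀ F y' lam w0) y) x0)
        (gradx F x0 w0)) (x0, lam) := by
  have hLag (α : ℝ) : (fun y => gradient (fun y' => Lag f₀ F y' α w0) y)
      = fun y => gradx f₀ y w0 + α • gradx F y w0 :=
    funext fun y =>
      gradient_lag (hf₀.differentiable two_ne_zero) (hF.differentiable two_ne_zero) y α w0
  have hgmap : (fun z => gmap f₀ F z w0)
      = fun z : En n × ℝ => (gradx f₀ z.1 w0 + z.2 • gradx F z.1 w0, -F (z.1, w0)) := by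
    ext z <;> simp [gmap, hLag]
  rw [hgmap, hLag]
  exact hasFDerivAt_add_smul_prodMk_neg lam
    (((contDiff_gradx hf₀ w0).differentiable one_ne_zero).differentiableAt)
    (((contDiff_gradx hF w0).differentiable one_ne_zero).differentiableAt)
    (((hF.differentiable two_ne_zero).comp (by fun_prop)).differentiableAt (x := x0)).hasGradientAt

end Lagrangian

theorem stmt12_general {n d : ℕ} (f₀ F : En n × En d → ℝ)
    (hf₀ : ContDiff ℝ 2 f₀) (hF : ContDiff ℝ 2 F)
    (x0 : En n) (w0 : En d) (lam : ℝ)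
    (hFeq : F (x0, w0) = 0)
    (hlam : 0 < lam)
    (hKKT : gradx f₀ x0 w0 + lam • gradx F x0 w0 = 0) :
    StrongRegular f₀ F w0 (x0, lam) ↔
      (blockMat (hessLagMat f₀ F x0 lam w0)
        (fun i => gradx F x0 w0 i)).det ≠ 0 := by
  have hroot : gmap f₀ F (x0, lam) w0 = 0 := by
    ext <;> simp [gmap, gradient_lag (hf₀.differentiable two_ne_zero)
      (hF.differentiable two_ne_zero), hKKT, hFeq]
  change StronglyRegularLinearGE _ (gmap f₀ F (x0, lam) w0) NK (x0, lam) ↔ _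
  rw [(hasFDerivAt_gmap hf₀ hF x0 w0 lam).fderiv, hroot,
    stronglyRegularLinearGE_iff_injective (eventually_NK_eq_singleton_zero hlam)]
  exact (det_blockMat_ne_zero_iff_injective _ _).symm

/-- For `F(x0,w0) = 0`, `∇ₓF(x0,w0) ≠ 0` and a positive Lagrange
multiplier `λ`, the generalized equation `0 ∈ g(x,α,w0) + N_K(x,α)` is strongly
regular at `(x0,λ)` iff the matrix `[[∇²ₓₓL(x0,λ,w0), ∇ₓF(x0,w0)], [∇ₓF(x0,w0)ᵀ, 0]]`
is nonsingular. -/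
theorem stmt12 {n d : ℕ} (f₀ F : En n × En d → ℝ)
    (hf₀ : ContDiff ℝ 2 f₀) (hF : ContDiff ℝ 2 F)
    (x0 : En n) (w0 : En d) (lam : ℝ)
    (hFeq : F (x0, w0) = 0)
    (hgF : gradx F x0 w0 ≠ 0)
    (hlam : 0 < lam)
    (hKKT : gradx f₀ x0 w0 + lam • gradx F x0 w0 = 0) :
    StrongRegular f₀ F w0 (x0, lam) ↔
      (blockMat (hessLagMat f₀ F x0 lam w0)
        (fun i => gradx F x0 w0 i)).det ≠ 0 :=
  stmt12_general f₀ F hf₀ hF x0 w0 lam hFeq hlam hKKT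
end
end

section
/- Let M be an invertible real n×n matrix and b ∈ ℝⁿ. Assume: (5a) the only pair (v,γ) ∈ ℝⁿ×ℝ with Mv + γb = 0 and bᵀv = 0 is (0,0); and (5b) there is no pair (v,γ) ∈ ℝⁿ×ℝ with Mv + γb = 0, bᵀv > 0 and γ ≥ 0. Then bᵀM⁻¹b > 0. -/
/-! The vector `v = -M⁻¹ b` satisfies `M v + 1 • b = 0`. Condition (5b) with `γ = 1` forces
`bᵀv ≤ 0`, and (5a) rules out `bᵀv = 0` since `γ = 1 ≠ 0`; hence `bᵀM⁻¹b = -bᵀv > 0`. -/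

open Matrix

theorem Matrix.mulVec_nonsing_inv_mulVec {n α : Type*} [Fintype n] [DecidableEq n] [CommRing α]
    (M : Matrix n n α) (hM : IsUnit M.det) (b : n → α) : M *ᵥ (M⁻¹ *ᵥ b) = b := by
  rw [mulVec_mulVec, mul_nonsing_inv M hM, one_mulVec]

/-- Let `M` be an invertible real `n×n` matrix and `b ∈ ℝⁿ`. If
(5a) the only `(v,γ)` with `Mv + γb = 0` and `bᵀv = 0` is `(0,0)`, and (5b) there is
no `(v,γ)` with `Mv + γb = 0`, `bᵀv > 0` and `γ ≥ 0`, then `bᵀM⁻¹b > 0`. -/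
theorem stmt19 {n : ℕ} (M : Matrix (Fin n) (Fin n) ℝ) (b : Fin n → ℝ)
    (hM : IsUnit M.det)
    (h5a : ∀ (v : Fin n → ℝ) (γ : ℝ),
      M.mulVec v + γ • b = 0 → b ⬝ᵥ v = 0 → v = 0 ∧ γ = 0)
    (h5b : ¬ ∃ (v : Fin n → ℝ) (γ : ℝ),
      M.mulVec v + γ • b = 0 ∧ 0 < b ⬝ᵥ v ∧ 0 ≤ γ) :
    0 < b ⬝ᵥ M⁻¹.mulVec b := by
  have hsol : M *ᵥ -(M⁻¹ *ᵥ b) + (1 : ℝ) • b = 0 := by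
    rw [mulVec_neg, M.mulVec_nonsing_inv_mulVec hM, one_smul, neg_add_cancel]
  have hle : b ⬝ᵥ -(M⁻¹ *ᵥ b) ≤ 0 :=
    not_lt.1 fun hpos => h5b ⟨_, 1, hsol, hpos, zero_le_one⟩
  have hne : b ⬝ᵥ -(M⁻¹ *ᵥ b) ≠ 0 :=
    fun hzero => one_ne_zero (h5a _ 1 hsol hzero).2
  rw [dotProduct_neg] at hle hne
  exact lt_of_le_of_ne (neg_nonpos.1 hle) (Ne.symm (neg_ne_zero.1 hne))
end
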